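/- Let Ω be a properly convex domain and γ ∈ Aut(Ω) a contracting element for (Ω, PS^Ω) where PS^Ω is the path system of all projective segments. Suppose for some x₀ ∈ Ω and sequences of positive integers n_k, m_k the limits p = lim γ^{n_k} x₀ ∈ E_γ⁺ and q = lim γ^{−m_k} x₀ ∈ E_γ⁻ exist. Then the open segment (p,q) is contained in Ω. -/

import Mathlib

open Set Filter

abbrev Vd (d : ℕ) := Fin (d + 1) → ℝ

/-- A properly convex domain `Ω ⊆ P(ℝ^{d+1})`, described by its open convex cone of lifts:
an open convex cone `C` whose closure contains no line through the origin. Points of the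
closure of `Ω` are represented by nonzero vectors of the closure of `C`, and two vectors
represent the same point iff they lie on the same ray. -/
def IsProperConvexCone {d : ℕ} (C : Set (Vd d)) : Prop :=
  IsOpen C ∧ Convex ℝ C ∧ C.Nonempty ∧
    (∀ x ∈ C, ∀ t : ℝ, 0 < t → t • x ∈ C) ∧
    (closure C ∩ (-(closure C)) ⊆ {0})

/-- Lifts of the projective segment `[x,y]` between the points represented by `x` and `y`. -/
def segCone {d : ℕ} (x y : Vd d) : Set (Vd d) :=
  {v | ∃ s t : ℝ, 0 ≤ s ∧ 0 ≤ t ∧ 0 < s + t ∧ v = s • x + t • y}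

/-- Lifts of the open projective segment `(x,y)`. -/
def openSegCone {d : ℕ} (x y : Vd d) : Set (Vd d) :=
  {v | ∃ s t : ℝ, 0 < s ∧ 0 < t ∧ v = s • x + t • y}

/-- The Hilbert metric on `Ω`, computed on cone lifts:
`d([x],[y]) = log ( M(x/y) · M(y/x) )` where `M(x/y) = inf { t > 0 | t • y - x ∈ closure C }`.
This agrees with the cross-ratio definition of the Hilbert metric and is invariant under
rescaling of the lifts. -/
noncomputable def coneDist {d : ℕ} (C : Set (Vd d)) (x y : Vd d) : ℝ :=
  Real.log (sInf {t : ℝ | 0 < t ∧ t • y - x ∈ closure C} *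
    sInf {t : ℝ | 0 < t ∧ t • x - y ∈ closure C})

/-- `A ∈ GL(d+1, ℝ)` induces an automorphism of `Ω` iff its linear action preserves the cone. -/
def PreservesCone {d : ℕ} (C : Set (Vd d)) (A : Matrix (Fin (d + 1)) (Fin (d + 1)) ℝ) : Prop :=
  A.mulVec '' C = C

/-- The translation length `τ_Ω(g) = inf_{x ∈ Ω} d_Ω(x, g x)`. -/
noncomputable def translationLength {d : ℕ} (C : Set (Vd d))
    (A : Matrix (Fin (d + 1)) (Fin (d + 1)) ℝ) : ℝ :=
  sInf ((fun x => coneDist C x (A.mulVec x)) '' C)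

/-- `λ_max`: the largest modulus of a (complex) eigenvalue of `A`. -/
noncomputable def specMax {d : ℕ} (A : Matrix (Fin (d + 1)) (Fin (d + 1)) ℝ) : ℝ :=
  sSup ((fun z : ℂ => ‖z‖) '' spectrum ℂ (A.map Complex.ofReal))

/-- `λ_min`: the smallest modulus of a (complex) eigenvalue of `A`. -/
noncomputable def specMin {d : ℕ} (A : Matrix (Fin (d + 1)) (Fin (d + 1)) ℝ) : ℝ :=
  sInf ((fun z : ℂ => ‖z‖) '' spectrum ℂ (A.map Complex.ofReal))

/-- Three pairwise distinct boundary points `x, y, z` form a half triangle if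
`[x,z] ∪ [y,z] ⊆ ∂Ω` and `(x,y) ⊆ Ω`. -/
def IsHalfTriangle {d : ℕ} (C : Set (Vd d)) (x y z : Vd d) : Prop :=
  segCone x z ⊆ frontier C ∧ segCone y z ⊆ frontier C ∧ openSegCone x y ⊆ C

/-- The bi-infinite projective line `(x,y)` is contained in a half triangle in `∂Ω`. -/
def InHalfTriangle {d : ℕ} (C : Set (Vd d)) (x y : Vd d) : Prop :=
  ∃ z ∈ frontier C, z ≠ 0 ∧ ¬ SameRay ℝ z x ∧ ¬ SameRay ℝ z y ∧ IsHalfTriangle C x y z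

/-- `(x,y)` is an axis of the automorphism induced by `A`: an invariant bi-infinite
projective line that intersects `Ω`. -/
def IsAxis {d : ℕ} (C : Set (Vd d)) (A : Matrix (Fin (d + 1)) (Fin (d + 1)) ℝ)
    (x y : Vd d) : Prop :=
  x ∈ frontier C ∧ y ∈ frontier C ∧ x ≠ 0 ∧ y ≠ 0 ∧ ¬ SameRay ℝ x y ∧
    openSegCone x y ⊆ C ∧ A.mulVec '' segCone x y = segCone x y

/-- A rank-one isometry: positive translation length, existence of an axis, and no axis
contained in a half triangle in `∂Ω`. -/
def IsRankOne {d : ℕ} (C : Set (Vd d)) (A : Matrix (Fin (d + 1)) (Fin (d + 1)) ℝ) : Prop :=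
  0 < translationLength C A ∧ (∃ x y, IsAxis C A x y) ∧
    ∀ x y, IsAxis C A x y → ¬ InHalfTriangle C x y

/-- The sum of the eigenspaces of (the complexification of) `A` for eigenvalues of
maximal modulus. -/
noncomputable def maxModEigenSubmodule {d : ℕ}
    (A : Matrix (Fin (d + 1)) (Fin (d + 1)) ℝ) : Submodule ℂ (Fin (d + 1) → ℂ) :=
  ⨆ μ ∈ {μ : ℂ | ‖μ‖ = specMax A},
    Module.End.eigenspace (Matrix.toLin' (A.map Complex.ofReal)) μ

/-- The set of real vectors lying (after complexification) in the sum of eigenspaces of `A`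
for eigenvalues of maximal modulus; its projectivization is `P(E_γ̃)`. -/
def Eset {d : ℕ} (A : Matrix (Fin (d + 1)) (Fin (d + 1)) ℝ) : Set (Vd d) :=
  {v | (fun i => (v i : ℂ)) ∈ maxModEigenSubmodule A}

/-- The matrix of `g^n` for `g` in the projective general linear group, `n : ℤ`. -/
def zpowMat {d : ℕ} (g : Matrix.GeneralLinearGroup (Fin (d + 1)) ℝ) (n : ℤ) :
    Matrix (Fin (d + 1)) (Fin (d + 1)) ℝ :=
  ((g ^ n : Matrix.GeneralLinearGroup (Fin (d + 1)) ℝ) : Matrix (Fin (d + 1)) (Fin (d + 1)) ℝ)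

/-- A subset `S` of `Ω` is `PS^Ω`-contracting (in the sense of Sisto, with the path system
of all projective segments): there are a constant `Cc` and a projection `π : Ω → S` which
moves points of `S` at most `Cc`, and such that whenever `d_Ω(π x, π y) ≥ Cc`, the
projective segment `[x,y]` passes within `Cc` of both `π x` and `π y`. -/
def IsPSContractingSet {d : ℕ} (C S : Set (Vd d)) : Prop :=
  ∃ Cc : ℝ, ∃ π : Vd d → Vd d, (∀ x ∈ C, π x ∈ S) ∧
    (∀ x ∈ S, coneDist C x (π x) ≤ Cc) ∧
    ∀ x ∈ C, ∀ y ∈ C, Cc ≤ coneDist C (π x) (π y) →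
      (∃ p ∈ segCone x y, coneDist C p (π x) ≤ Cc) ∧
      (∃ p ∈ segCone x y, coneDist C p (π y) ≤ Cc)

/-- `g` is a contracting element for `(Ω, PS^Ω)` in the sense of Sisto: `g` has infinite
order (projectively), some orbit `⟨g⟩x₀` is a quasigeodesic embedding of `ℤ`, and there
is a `⟨g⟩`-invariant `PS^Ω`-contracting subset containing `x₀` with cobounded `⟨g⟩`
action. -/
def IsContractingElement {d : ℕ} (C : Set (Vd d))
    (g : Matrix.GeneralLinearGroup (Fin (d + 1)) ℝ) : Prop :=
  ∃ x₀ ∈ C,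
    (∀ n : ℤ, n ≠ 0 → ∀ c : ℝ, zpowMat g n ≠ c • (1 : Matrix (Fin (d + 1)) (Fin (d + 1)) ℝ)) ∧
    (∃ K Cq : ℝ, 1 ≤ K ∧ 0 ≤ Cq ∧ ∀ m n : ℤ,
      |(m : ℝ) - (n : ℝ)| / K - Cq ≤
          coneDist C ((zpowMat g m).mulVec x₀) ((zpowMat g n).mulVec x₀) ∧
        coneDist C ((zpowMat g m).mulVec x₀) ((zpowMat g n).mulVec x₀) ≤
          K * |(m : ℝ) - (n : ℝ)| + Cq) ∧
    ∃ S : Set (Vd d), S ⊆ C ∧ x₀ ∈ S ∧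
      (∀ n : ℤ, ∀ v ∈ S, (zpowMat g n).mulVec v ∈ S) ∧
      IsPSContractingSet C S ∧
      ∃ R : ℝ, ∀ v ∈ S, ∃ n : ℤ, coneDist C v ((zpowMat g n).mulVec x₀) ≤ R

/-!
The segment from `γ^n x₀` to `γ^(-m) x₀` passes within a uniform Hilbert distance of `x₀`.
Index each point of `Ω` by an orbit point `γ^i y₀` near its projection to the contracting
set. Projections of nearby points are close, so along the segment the index moves in bounded
steps; it runs from about `n` to about `-m`, hence takes a value in a fixed window `[0, J]` at
some point `w`, whose projection is then close to `y₀`. The contraction property applied to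
the subsegment `[w, γ^n x₀]` yields a point of the segment near that projection.

Rescaled, these points subconverge to a point of `[p, q]`. It stays at bounded distance from
`x₀`, so it lies in `Ω` rather than on `∂Ω`, and a segment between points of `closure Ω` that
meets `Ω` has its interior in `Ω`.
-/

open Pointwise

/-- `M(x/y)` in the notation of `coneDist`. -/
noncomputable def coneRatio {d : ℕ} (C : Set (Vd d)) (x y : Vd d) : ℝ :=
  sInf {t : ℝ | 0 < t ∧ t • y - x ∈ closure C}

section ConeRatio

variable {d : ℕ} {C : Set (Vd d)} {x y z : Vd d}

theorem coneDist_eq_log (C : Set (Vd d)) (x y : Vd d) :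
    coneDist C x y = Real.log (coneRatio C x y * coneRatio C y x) := rfl

theorem coneDist_comm (C : Set (Vd d)) (x y : Vd d) : coneDist C x y = coneDist C y x := by
  rw [coneDist_eq_log, coneDist_eq_log, mul_comm]

theorem coneRatio_le {t : ℝ} (ht : 0 < t) (h : t • y - x ∈ closure C) : coneRatio C x y ≤ t :=
  csInf_le ⟨0, fun _ hs => hs.1.le⟩ ⟨ht, h⟩

theorem coneRatio_smul_right {c : ℝ} (hc : 0 < c) :
    coneRatio C x (c • y) = c⁻¹ * coneRatio C x y := by
  have hset : {t : ℝ | 0 < t ∧ t • c • y - x ∈ closure C} =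
      c⁻¹ • {t : ℝ | 0 < t ∧ t • y - x ∈ closure C} := by
    ext t
    rw [Set.mem_smul_set_iff_inv_smul_mem₀ (inv_ne_zero hc.ne'), inv_inv, smul_eq_mul]
    simp only [Set.mem_ofPred_eq, smul_smul, mul_comm t c]
    exact and_congr_left' (mul_pos_iff_of_pos_left hc).symm
  rw [coneRatio, hset, Real.sInf_smul_of_nonneg (inv_nonneg.2 hc.le), smul_eq_mul]
  rfl

end ConeRatio

instance {d : ℕ} : ContinuousConstSMul (Matrix.GeneralLinearGroup (Fin (d + 1)) ℝ) (Vd d) :=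
  ⟨fun _ => continuous_const.matrix_mulVec continuous_id⟩

theorem zpowMat_mulVec {d : ℕ} (g : Matrix.GeneralLinearGroup (Fin (d + 1)) ℝ) (n : ℤ)
    (v : Vd d) : (zpowMat g n).mulVec v = g ^ n • v := rfl

namespace IsProperConvexCone

variable {d : ℕ} {C : Set (Vd d)} (hC : IsProperConvexCone C) {x y z : Vd d}
include hC

theorem smul_mem (hx : x ∈ C) {t : ℝ} (ht : 0 < t) : t • x ∈ C := hC.2.2.2.1 x hx t ht

theorem eq_zero_of_mem_closure_of_neg_mem (hx : x ∈ closure C) (hx' : -x ∈ closure C) :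
    x = 0 :=
  hC.2.2.2.2 ⟨hx, hx'⟩

theorem zero_notMem : (0 : Vd d) ∉ C := by
  intro h0
  set e : Vd d := fun _ => 1
  have he : e ≠ 0 := fun h => one_ne_zero (congrFun h 0)
  have hnear : ∀ᶠ t in nhds (0 : ℝ), t • e ∈ C :=
    (continuous_id.smul continuous_const).tendsto' 0 0 (zero_smul ℝ e) |>.eventually_mem
      (hC.1.mem_nhds h0)
  obtain ⟨ε, hε, hball⟩ := Metric.eventually_nhds_iff.1 hnear
  have hpos : (ε / 2) • e ∈ C :=
    hball (by rw [Real.dist_eq, sub_zero, abs_of_pos (by positivity)]; linarith)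
  have hneg : (-(ε / 2)) • e ∈ C :=
    hball (by rw [Real.dist_eq, sub_zero, abs_neg, abs_of_pos (by positivity)]; linarith)
  have := hC.eq_zero_of_mem_closure_of_neg_mem (subset_closure hpos)
    (by rw [← neg_smul]; exact subset_closure hneg)
  exact he ((smul_eq_zero.1 this).resolve_left (by positivity))

theorem ne_zero_of_mem (hx : x ∈ C) : x ≠ 0 := fun h => hC.zero_notMem (h ▸ hx)

theorem zero_mem_closure : (0 : Vd d) ∈ closure C := by
  obtain ⟨v, hv⟩ := hC.2.2.1
  have hlim : Filter.Tendsto (fun t : ℝ => t • v) (nhdsWithin 0 (Set.Ioi 0)) (nhds 0) :=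
    tendsto_nhdsWithin_of_tendsto_nhds
      ((continuous_id.smul continuous_const).tendsto' 0 0 (zero_smul ℝ v))
  exact mem_closure_of_tendsto hlim
    (eventually_nhdsWithin_of_forall fun t (ht : 0 < t) => hC.smul_mem hv ht)

theorem smul_mem_closure (hx : x ∈ closure C) {t : ℝ} (ht : 0 ≤ t) : t • x ∈ closure C := by
  rcases ht.eq_or_lt with rfl | ht
  · rw [zero_smul]
    exact hC.zero_mem_closure
  · exact map_mem_closure (continuous_const_smul t) hx fun v hv => hC.smul_mem hv ht

theorem add_mem_closure (hx : x ∈ closure C) (hy : y ∈ closure C) : x + y ∈ closure C := by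
  have := hC.smul_mem_closure (hC.2.1.closure hx hy (by norm_num) (by norm_num)
    (add_halves 1)) zero_le_two
  rwa [smul_add, smul_smul, smul_smul, mul_one_div_cancel two_ne_zero, one_smul, one_smul] at this

theorem add_mem_of_mem_of_mem_closure (hx : x ∈ C) (hy : y ∈ closure C) : x + y ∈ C := by
  have hmid := hC.2.1.combo_interior_closure_mem_interior (hC.1.interior_eq.symm ▸ hx) hy
    (by norm_num : (0 : ℝ) < 1 / 2) (by norm_num : (0 : ℝ) ≤ 1 / 2) (add_halves 1)
  have := hC.smul_mem (hC.1.interior_eq ▸ hmid) two_pos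
  rwa [smul_add, smul_smul, smul_smul, mul_one_div_cancel two_ne_zero, one_smul, one_smul] at this

theorem smul_mem_closure_iff {c : ℝ} (hc : 0 < c) : c • x ∈ closure C ↔ x ∈ closure C := by
  refine ⟨fun h => ?_, fun h => hC.smul_mem_closure h hc.le⟩
  simpa [smul_smul, inv_mul_cancel₀ hc.ne'] using hC.smul_mem_closure h (inv_nonneg.2 hc.le)

theorem smul_sub_mem_closure_of_ball {r : ℝ} (hr : 0 < r) (hball : Metric.ball y r ⊆ C)
    (x : Vd d) : (1 + ‖x - y‖ / r) • y - x ∈ closure C := by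
  rcases eq_or_ne x y with rfl | hxy
  · simpa using hC.zero_mem_closure
  set s := ‖x - y‖ / r
  have hs : 0 < s := div_pos (norm_pos_iff.2 (sub_ne_zero.2 hxy)) hr
  have hmem : y + s⁻¹ • (y - x) ∈ closure C := by
    refine closure_mono hball ?_
    rw [closure_ball y hr.ne', Metric.mem_closedBall, dist_eq_norm, add_sub_cancel_left,
      norm_smul, norm_inv, Real.norm_of_nonneg hs.le, norm_sub_rev]
    exact (inv_mul_le_iff₀ hs).2 (by rw [div_mul_cancel₀ _ hr.ne'])
  convert hC.smul_mem_closure hmem hs.le using 1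
  rw [smul_add, smul_smul, mul_inv_cancel₀ hs.ne', one_smul, add_smul, one_smul]
  abel

theorem coneRatio_le_of_ball {r : ℝ} (hr : 0 < r) (hball : Metric.ball y r ⊆ C) (x : Vd d) :
    coneRatio C x y ≤ 1 + ‖x - y‖ / r :=
  coneRatio_le (by positivity) (hC.smul_sub_mem_closure_of_ball hr hball x)

theorem coneRatio_spec (hx : x ∈ closure C) (hx0 : x ≠ 0) (hy : y ∈ C) :
    0 < coneRatio C x y ∧ coneRatio C x y • y - x ∈ closure C := by
  obtain ⟨r, hr, hball⟩ := Metric.isOpen_iff.1 hC.1 y hy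
  have hne : {t : ℝ | 0 < t ∧ t • y - x ∈ closure C}.Nonempty :=
    ⟨_, by positivity, hC.smul_sub_mem_closure_of_ball hr hball x⟩
  have hmem : coneRatio C x y • y - x ∈ closure C :=
    closure_minimal (fun t (ht : 0 < t ∧ t • y - x ∈ closure C) => ht.2)
      (isClosed_closure.preimage (by fun_prop)) (csInf_mem_closure hne ⟨0, fun _ ht => ht.1.le⟩)
  refine ⟨(le_csInf hne fun _ ht => ht.1.le).lt_of_ne fun h => hx0 ?_, hmem⟩
  rw [coneRatio, ← h, zero_smul, zero_sub] at hmem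
  exact hC.eq_zero_of_mem_closure_of_neg_mem hx hmem

theorem coneRatio_pos (hx : x ∈ C) (hy : y ∈ C) : 0 < coneRatio C x y :=
  (hC.coneRatio_spec (subset_closure hx) (hC.ne_zero_of_mem hx) hy).1

theorem one_le_coneRatio_mul (hx : x ∈ C) (hy : y ∈ C) :
    1 ≤ coneRatio C x y * coneRatio C y x := by
  obtain ⟨hm₁, hxy⟩ := hC.coneRatio_spec (subset_closure hx) (hC.ne_zero_of_mem hx) hy
  obtain ⟨hm₂, hyx⟩ := hC.coneRatio_spec (subset_closure hy) (hC.ne_zero_of_mem hy) hx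
  by_contra! hlt
  have hsum := hC.add_mem_closure (hC.smul_mem_closure hxy hm₂.le) hyx
  have hpos := hC.smul_mem_closure (subset_closure hy) (sub_nonneg.2 hlt.le)
  have h0 := hC.eq_zero_of_mem_closure_of_neg_mem hpos (by convert hsum using 1; module)
  exact hC.ne_zero_of_mem hy ((smul_eq_zero.1 h0).resolve_left (sub_pos.2 hlt).ne')

theorem coneDist_nonneg (hx : x ∈ C) (hy : y ∈ C) : 0 ≤ coneDist C x y :=
  Real.log_nonneg (hC.one_le_coneRatio_mul hx hy)

theorem coneDist_self (hx : x ∈ C) : coneDist C x x = 0 := by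
  have hle : coneRatio C x x ≤ 1 := coneRatio_le one_pos (by simpa using hC.zero_mem_closure)
  have hge := hC.one_le_coneRatio_mul hx hx
  have hpos := hC.coneRatio_pos hx hx
  rw [coneDist_eq_log, le_antisymm (mul_le_one₀ hle hpos.le hle) hge, Real.log_one]

theorem coneRatio_le_mul (hx : x ∈ C) (hy : y ∈ C) (hz : z ∈ C) :
    coneRatio C x z ≤ coneRatio C x y * coneRatio C y z := by
  obtain ⟨hm₁, hxy⟩ := hC.coneRatio_spec (subset_closure hx) (hC.ne_zero_of_mem hx) hy
  obtain ⟨hm₂, hyz⟩ := hC.coneRatio_spec (subset_closure hy) (hC.ne_zero_of_mem hy) hz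
  refine coneRatio_le (mul_pos hm₁ hm₂) ?_
  convert hC.add_mem_closure (hC.smul_mem_closure hyz hm₁.le) hxy using 1
  module

theorem coneDist_triangle (hx : x ∈ C) (hy : y ∈ C) (hz : z ∈ C) :
    coneDist C x z ≤ coneDist C x y + coneDist C y z := by
  simp only [coneDist_eq_log]
  have := hC.coneRatio_pos hx hy
  have := hC.coneRatio_pos hy hx
  have := hC.coneRatio_pos hy hz
  have := hC.coneRatio_pos hz hy
  rw [← Real.log_mul (by positivity) (by positivity)]
  refine Real.log_le_log (mul_pos (hC.coneRatio_pos hx hz) (hC.coneRatio_pos hz hx)) ?_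
  calc coneRatio C x z * coneRatio C z x
      ≤ (coneRatio C x y * coneRatio C y z) * (coneRatio C z y * coneRatio C y x) :=
        mul_le_mul (hC.coneRatio_le_mul hx hy hz) (hC.coneRatio_le_mul hz hy hx)
          (hC.coneRatio_pos hz hx).le (by positivity)
    _ = _ := by ring

theorem coneRatio_smul_left {c : ℝ} (hc : 0 < c) :
    coneRatio C (c • x) y = c * coneRatio C x y := by
  have hset : {t : ℝ | 0 < t ∧ t • y - c • x ∈ closure C} =
      c • {t : ℝ | 0 < t ∧ t • y - x ∈ closure C} := by
    ext t
    rw [Set.mem_smul_set_iff_inv_smul_mem₀ hc.ne', smul_eq_mul]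
    simp only [Set.mem_ofPred_eq]
    refine and_congr (mul_pos_iff_of_pos_left (inv_pos.2 hc)).symm ?_
    rw [← hC.smul_mem_closure_iff (inv_pos.2 hc), smul_sub, smul_smul, smul_smul,
      inv_mul_cancel₀ hc.ne', one_smul]
  rw [coneRatio, hset, Real.sInf_smul_of_nonneg hc.le, smul_eq_mul]
  rfl

theorem coneDist_smul_left {c : ℝ} (hc : 0 < c) : coneDist C (c • x) y = coneDist C x y := by
  rw [coneDist_eq_log, coneDist_eq_log, hC.coneRatio_smul_left hc, coneRatio_smul_right hc,
    mul_mul_mul_comm, mul_inv_cancel₀ hc.ne', one_mul]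

theorem coneDist_smul_right {c : ℝ} (hc : 0 < c) : coneDist C x (c • y) = coneDist C x y := by
  rw [coneDist_comm, hC.coneDist_smul_left hc, coneDist_comm]

theorem coneDist_smul_smul {c c' : ℝ} (hc : 0 < c) (hc' : 0 < c') :
    coneDist C (c • x) (c' • y) = coneDist C x y := by
  rw [hC.coneDist_smul_left hc, hC.coneDist_smul_right hc']

theorem coneDist_le_of_ball {r : ℝ} (hr : 0 < r) (hx : Metric.ball x r ⊆ C)
    (hy : Metric.ball y r ⊆ C) : coneDist C x y ≤ 2 * ‖x - y‖ / r := by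
  have hxC := hx (Metric.mem_ball_self hr)
  have hyC := hy (Metric.mem_ball_self hr)
  have hxy := hC.coneRatio_le_of_ball hr hy x
  have hyx := hC.coneRatio_le_of_ball hr hx y
  rw [norm_sub_rev] at hyx
  calc coneDist C x y ≤ Real.log ((1 + ‖x - y‖ / r) * (1 + ‖x - y‖ / r)) :=
        Real.log_le_log (mul_pos (hC.coneRatio_pos hxC hyC) (hC.coneRatio_pos hyC hxC))
          (mul_le_mul hxy hyx (hC.coneRatio_pos hyC hxC).le (by positivity))
    _ = 2 * Real.log (1 + ‖x - y‖ / r) := by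
        rw [Real.log_mul (by positivity) (by positivity)]
        ring
    _ ≤ 2 * (‖x - y‖ / r) := by
        have := Real.log_le_sub_one_of_pos (by positivity : 0 < 1 + ‖x - y‖ / r)
        linarith
    _ = 2 * ‖x - y‖ / r := by ring

end IsProperConvexCone

open AffineMap (lineMap)

section Segments

variable {d : ℕ} {a b v w x y : Vd d}

theorem left_mem_segCone : x ∈ segCone x y := ⟨1, 0, zero_le_one, le_rfl, by norm_num, by simp⟩

theorem right_mem_segCone : y ∈ segCone x y := ⟨0, 1, le_rfl, zero_le_one, by norm_num, by simp⟩

theorem smul_lineMap_mem_segCone {c α : ℝ} (hc : 0 < c) (hα : α ∈ Icc (0 : ℝ) 1) :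
    c • lineMap x y α ∈ segCone x y :=
  ⟨c * (1 - α), c * α, mul_nonneg hc.le (sub_nonneg.2 hα.2), mul_nonneg hc.le hα.1,
    by nlinarith, by rw [AffineMap.lineMap_apply_module]; module⟩

theorem exists_eq_smul_lineMap_of_mem_segCone (hv : v ∈ segCone x y) :
    ∃ c > (0 : ℝ), ∃ α ∈ Icc (0 : ℝ) 1, v = c • lineMap x y α := by
  obtain ⟨s, t, hs, ht, hst, rfl⟩ := hv
  refine ⟨s + t, hst, t / (s + t), ⟨by positivity, (div_le_one hst).2 (by linarith)⟩, ?_⟩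
  rw [AffineMap.lineMap_apply_module, smul_add, smul_smul, smul_smul,
    mul_div_cancel₀ _ hst.ne', mul_sub, mul_one, mul_div_cancel₀ _ hst.ne', add_sub_cancel_right]

theorem segCone_subset_segCone (hv : v ∈ segCone x y) (hw : w ∈ segCone x y) :
    segCone v w ⊆ segCone x y := by
  obtain ⟨s₁, t₁, hs₁, ht₁, hst₁, rfl⟩ := hv
  obtain ⟨s₂, t₂, hs₂, ht₂, hst₂, rfl⟩ := hw
  rintro _ ⟨s, t, hs, ht, hst, rfl⟩
  refine ⟨s * s₁ + t * s₂, s * t₁ + t * t₂, by positivity, by positivity, ?_, by module⟩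
  rcases hs.eq_or_lt with rfl | hs
  · nlinarith [mul_pos (by simpa using hst : 0 < t) hst₂]
  · nlinarith [mul_pos hs hst₁, mul_nonneg ht hst₂.le]

theorem segCone_subset_segCone_smul {c c' : ℝ} (hc : 0 < c) (hc' : 0 < c') :
    segCone x y ⊆ segCone (c • x) (c' • y) := by
  rintro _ ⟨s, t, hs, ht, hst, rfl⟩
  refine ⟨s / c, t / c', by positivity, by positivity, ?_, by
    rw [smul_smul, smul_smul, div_mul_cancel₀ _ hc.ne', div_mul_cancel₀ _ hc'.ne']⟩
  rcases hs.eq_or_lt with rfl | hs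
  · simpa using div_pos (by simpa using hst) hc'
  · exact add_pos_of_pos_of_nonneg (div_pos hs hc) (by positivity)

theorem lineMap_lineMap (α β θ : ℝ) :
    lineMap (lineMap a b α) (lineMap a b β) θ = lineMap a b (lineMap α β θ) := by
  simp only [AffineMap.lineMap_apply_module, smul_eq_mul]
  module

end Segments

namespace IsProperConvexCone

open Topology

variable {d : ℕ} {C : Set (Vd d)} (hC : IsProperConvexCone C) {a b p q x y x₀ z : Vd d}
include hC

theorem segCone_subset (hx : x ∈ C) (hy : y ∈ C) : segCone x y ⊆ C := fun v hv => by
  obtain ⟨c, hc, α, hα, rfl⟩ := exists_eq_smul_lineMap_of_mem_segCone hv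
  exact hC.smul_mem (hC.2.1.lineMap_mem hx hy hα) hc

theorem exists_coneDist_lineMap_le (ha : a ∈ C) (hb : b ∈ C) :
    ∃ L, ∀ α ∈ Icc (0 : ℝ) 1, ∀ β ∈ Icc (0 : ℝ) 1,
      coneDist C (lineMap a b α) (lineMap a b β) ≤ L * |α - β| := by
  have hcpt : IsCompact (lineMap a b '' Icc (0 : ℝ) 1) :=
    isCompact_Icc.image AffineMap.lineMap_continuous
  have hsub : lineMap a b '' Icc (0 : ℝ) 1 ⊆ C :=
    Set.image_subset_iff.2 fun α hα => hC.2.1.lineMap_mem ha hb hα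
  obtain ⟨r, hr, hthick⟩ := hcpt.exists_thickening_subset_open hC.1 hsub
  have hball : ∀ γ ∈ Icc (0 : ℝ) 1, Metric.ball (lineMap a b γ) r ⊆ C := fun γ hγ =>
    (Metric.ball_subset_thickening (Set.mem_image_of_mem _ hγ) r).trans hthick
  refine ⟨2 * ‖b - a‖ / r, fun α hα β hβ => ?_⟩
  have hdiff : lineMap a b α - lineMap a b β = (α - β) • (b - a) := by
    simp only [AffineMap.lineMap_apply_module]
    module
  calc coneDist C (lineMap a b α) (lineMap a b β)
      ≤ 2 * ‖lineMap a b α - lineMap a b β‖ / r :=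
        hC.coneDist_le_of_ball hr (hball α hα) (hball β hβ)
    _ = 2 * ‖b - a‖ / r * |α - β| := by
        rw [hdiff, norm_smul, Real.norm_eq_abs]
        ring

theorem exists_segCone_lineMap_coneDist_le (ha : a ∈ C) (hb : b ∈ C) :
    ∃ L, ∀ α ∈ Icc (0 : ℝ) 1, ∀ β ∈ Icc (0 : ℝ) 1,
      ∀ v ∈ segCone (lineMap a b α) (lineMap a b β),
      ∀ w ∈ segCone (lineMap a b α) (lineMap a b β), coneDist C v w ≤ L * |α - β| := by
  obtain ⟨L, hL⟩ := hC.exists_coneDist_lineMap_le ha hb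
  have hL0 : 0 ≤ L := by
    have := (hC.coneDist_nonneg (hC.2.1.lineMap_mem ha hb (Set.left_mem_Icc.2 zero_le_one))
      (hC.2.1.lineMap_mem ha hb (Set.right_mem_Icc.2 zero_le_one))).trans
      (hL 0 (Set.left_mem_Icc.2 zero_le_one) 1 (Set.right_mem_Icc.2 zero_le_one))
    simpa using this
  refine ⟨L, fun α hα β hβ v hv w hw => ?_⟩
  obtain ⟨c, hc, θ, hθ, rfl⟩ := exists_eq_smul_lineMap_of_mem_segCone hv
  obtain ⟨c', hc', θ', hθ', rfl⟩ := exists_eq_smul_lineMap_of_mem_segCone hw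
  have hIcc : Convex ℝ (Icc (0 : ℝ) 1) := convex_Icc 0 1
  rw [hC.coneDist_smul_smul hc hc', lineMap_lineMap, lineMap_lineMap]
  refine (hL _ (hIcc.lineMap_mem hα hβ hθ) _ (hIcc.lineMap_mem hα hβ hθ')).trans ?_
  have hdiff : lineMap α β θ - lineMap α β θ' = (θ - θ') * (β - α) := by
    simp only [AffineMap.lineMap_apply_module, smul_eq_mul]
    ring
  have hθθ' : |θ - θ'| ≤ 1 :=
    abs_sub_le_iff.2 ⟨by linarith [hθ.2, hθ'.1], by linarith [hθ.1, hθ'.2]⟩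
  rw [hdiff, abs_mul, abs_sub_comm β]
  exact mul_le_mul_of_nonneg_left (mul_le_of_le_one_left (abs_nonneg _) hθθ') hL0

theorem exists_segCone_coneDist_le (ha : a ∈ C) (hb : b ∈ C) :
    ∃ D, ∀ v ∈ segCone a b, ∀ w ∈ segCone a b, coneDist C v w ≤ D := by
  obtain ⟨L, hL⟩ := hC.exists_segCone_lineMap_coneDist_le ha hb
  refine ⟨L, fun v hv w hw => ?_⟩
  have := hL 0 (Set.left_mem_Icc.2 zero_le_one) 1 (Set.right_mem_Icc.2 zero_le_one)
  simp only [AffineMap.lineMap_apply_zero, AffineMap.lineMap_apply_one] at this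
  simpa using this v hv w hw

theorem lineMap_ne_zero (hp : p ∈ closure C) (hq : q ∈ closure C) (hp0 : p ≠ 0) (hq0 : q ≠ 0)
    {α : ℝ} (hα : α ∈ Icc (0 : ℝ) 1) : lineMap p q α ≠ 0 := by
  intro h
  rw [AffineMap.lineMap_apply_module, add_eq_zero_iff_eq_neg] at h
  have hp' := hC.smul_mem_closure hp (sub_nonneg.2 hα.2)
  have hq' := hC.smul_mem_closure hq hα.1
  have h0 := hC.eq_zero_of_mem_closure_of_neg_mem hq' (h ▸ by simpa using hp')
  obtain rfl : α = 0 := (smul_eq_zero.1 h0).resolve_right hq0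
  exact hp0 (by simpa using h)

theorem mem_of_tendsto_of_coneDist_le {v : ℕ → Vd d} {D : ℝ} (hx₀ : x₀ ∈ C)
    (hv : ∀ k, v k ∈ C) (hz : z ≠ 0) (hlim : Tendsto v atTop (𝓝 z))
    (hD : ∀ k, coneDist C x₀ (v k) ≤ D) : z ∈ C := by
  obtain ⟨r, hr, hball⟩ := Metric.isOpen_iff.1 hC.1 x₀ hx₀
  have hzcl : z ∈ closure C := mem_closure_of_tendsto hlim (Eventually.of_forall hv)
  set s : ℕ → ℝ := fun k => coneRatio C (v k) x₀
  set u : ℕ → ℝ := fun k => (coneRatio C x₀ (v k))⁻¹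
  have hspec k := hC.coneRatio_spec (subset_closure (hv k)) (hC.ne_zero_of_mem (hv k)) hx₀
  have hspec' k := hC.coneRatio_spec (subset_closure hx₀) (hC.ne_zero_of_mem hx₀) (hv k)
  obtain ⟨M, hM⟩ := ((hlim.sub_const x₀).norm.div_const r).const_add 1 |>.bddAbove_range
  have hsM k : s k ≤ M := (hC.coneRatio_le_of_ball hr hball (v k)).trans (hM ⟨k, rfl⟩)
  -- `s k / u k = coneRatio C (v k) x₀ * coneRatio C x₀ (v k)` lies in `[1, exp D]`
  have hu k : s k / Real.exp D ≤ u k ∧ u k ≤ s k := by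
    have h1 := hC.one_le_coneRatio_mul hx₀ (hv k)
    have h2 : coneRatio C x₀ (v k) * s k ≤ Real.exp D :=
      (Real.log_le_iff_le_exp (by linarith)).1 (hD k)
    have ht := (hspec' k).1
    constructor
    · rw [div_le_iff₀ (Real.exp_pos D), ← div_eq_inv_mul, le_div_iff₀ ht]; linarith
    · rw [inv_le_iff_one_le_mul₀ ht]; linarith
  have hmem k : (s k, u k) ∈ Icc (0 : ℝ) M ×ˢ Icc (0 : ℝ) M :=
    ⟨⟨(hspec k).1.le, hsM k⟩, ⟨(div_nonneg (hspec k).1.le (Real.exp_pos D).le).trans (hu k).1,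
      (hu k).2.trans (hsM k)⟩⟩
  obtain ⟨⟨σ, μ⟩, -, φ, hφ, hσμ⟩ := (isCompact_Icc.prod isCompact_Icc).tendsto_subseq hmem
  have hvφ := hlim.comp hφ.tendsto_atTop
  have hσ : σ • x₀ - z ∈ closure C :=
    isClosed_closure.mem_of_tendsto ((hσμ.fst_nhds.smul_const x₀).sub hvφ)
      (Eventually.of_forall fun k => (hspec (φ k)).2)
  have hσpos : 0 < σ := by
    refine lt_of_le_of_ne (ge_of_tendsto' hσμ.fst_nhds fun k => (hspec (φ k)).1.le)
      fun h => hz ?_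
    rw [← h, zero_smul, zero_sub] at hσ
    exact hC.eq_zero_of_mem_closure_of_neg_mem hzcl hσ
  have hμpos : 0 < μ := (div_pos hσpos (Real.exp_pos D)).trans_le
    (le_of_tendsto_of_tendsto' (hσμ.fst_nhds.div_const _) hσμ.snd_nhds fun k => (hu (φ k)).1)
  have hzμ : z - μ • x₀ ∈ closure C := by
    refine isClosed_closure.mem_of_tendsto (hvφ.sub (hσμ.snd_nhds.smul_const x₀))
      (Eventually.of_forall fun k => ?_)
    convert hC.smul_mem_closure (hspec' (φ k)).2 (inv_nonneg.2 (hspec' (φ k)).1.le) using 1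
    rw [smul_sub, smul_smul, inv_mul_cancel₀ (hspec' (φ k)).1.ne', one_smul]
    rfl
  simpa using hC.add_mem_of_mem_of_mem_closure (hC.smul_mem hx₀ hμpos) hzμ

theorem openSegCone_subset_of_lineMap_mem (hp : p ∈ closure C) (hq : q ∈ closure C)
    {α : ℝ} (hα : α ∈ Icc (0 : ℝ) 1) (hpq : lineMap p q α ∈ C) : openSegCone p q ⊆ C := by
  rintro _ ⟨s, t, hs, ht, rfl⟩
  set l := min s t
  have hl : 0 < l := lt_min hs ht
  have hls : l * (1 - α) ≤ s := by nlinarith [min_le_left s t, hα.1]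
  have hlt : l * α ≤ t := by nlinarith [min_le_right s t, hα.2]
  have hsplit :
      s • p + t • q = l • lineMap p q α + ((s - l * (1 - α)) • p + (t - l * α) • q) := by
    rw [AffineMap.lineMap_apply_module]
    module
  rw [hsplit]
  exact hC.add_mem_of_mem_of_mem_closure (hC.smul_mem hpq hl) (hC.add_mem_closure
    (hC.smul_mem_closure hp (sub_nonneg.2 hls)) (hC.smul_mem_closure hq (sub_nonneg.2 hlt)))

theorem openSegCone_subset_of_tendsto {A B : ℕ → Vd d} {D : ℝ} (hx₀ : x₀ ∈ C)
    (hA : ∀ k, A k ∈ C) (hB : ∀ k, B k ∈ C) (hAp : Tendsto A atTop (𝓝 p))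
    (hBq : Tendsto B atTop (𝓝 q)) (hp : p ∈ closure C) (hq : q ∈ closure C) (hp0 : p ≠ 0)
    (hq0 : q ≠ 0) (hD : ∀ k, ∃ v ∈ segCone (A k) (B k), coneDist C x₀ v ≤ D) :
    openSegCone p q ⊆ C := by
  choose v hvseg hvD using hD
  choose c hc α hα hv using fun k => exists_eq_smul_lineMap_of_mem_segCone (hvseg k)
  obtain ⟨α₀, hα₀, φ, hφ, hαφ⟩ := isCompact_Icc.tendsto_subseq hα
  have hlim : Tendsto (fun k => lineMap (A (φ k)) (B (φ k)) (α (φ k))) atTop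
      (𝓝 (lineMap p q α₀)) := by
    simp only [AffineMap.lineMap_apply_module]
    exact (((tendsto_const_nhds.sub hαφ).smul (hAp.comp hφ.tendsto_atTop))).add
      (hαφ.smul (hBq.comp hφ.tendsto_atTop))
  refine hC.openSegCone_subset_of_lineMap_mem hp hq hα₀ <|
    hC.mem_of_tendsto_of_coneDist_le (D := D) hx₀
      (fun k => hC.2.1.lineMap_mem (hA _) (hB _) (hα _)) (hC.lineMap_ne_zero hp hq hp0 hq0 hα₀)
      hlim fun k => ?_
  rw [← hC.coneDist_smul_right (hc (φ k)), ← hv]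
  exact hvD _

end IsProperConvexCone

section Automorphism

variable {d : ℕ} {C : Set (Vd d)} {h : Matrix.GeneralLinearGroup (Fin (d + 1)) ℝ} {x y : Vd d}

theorem segCone_smul : segCone (h • x) (h • y) = h • segCone x y := by
  ext v
  rw [Set.mem_smul_set_iff_inv_smul_mem]
  constructor
  · rintro ⟨s, t, hs, ht, hst, rfl⟩
    exact ⟨s, t, hs, ht, hst, by simp only [smul_add, smul_comm h⁻¹, inv_smul_smul]⟩
  · rintro ⟨s, t, hs, ht, hst, hv⟩
    exact ⟨s, t, hs, ht, hst, by rw [← smul_inv_smul h v, hv, smul_add, smul_comm h, smul_comm h]⟩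

variable (hh : h ∈ MulAction.stabilizer (Matrix.GeneralLinearGroup (Fin (d + 1)) ℝ) C)
include hh

theorem smul_mem_iff_of_mem_stabilizer : h • x ∈ C ↔ x ∈ C := by
  conv_lhs => rw [← MulAction.mem_stabilizer_iff.1 hh]
  exact Set.smul_mem_smul_set_iff

theorem smul_mem_closure_iff_of_mem_stabilizer : h • x ∈ closure C ↔ x ∈ closure C := by
  conv_lhs => rw [← MulAction.mem_stabilizer_iff.1 hh, closure_smul]
  exact Set.smul_mem_smul_set_iff

theorem zpow_smul_mem_of_mem_stabilizer (hx : x ∈ C) (n : ℤ) : h ^ n • x ∈ C :=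
  (smul_mem_iff_of_mem_stabilizer (Subgroup.zpow_mem _ hh n)).2 hx

theorem coneDist_smul_of_mem_stabilizer : coneDist C (h • x) (h • y) = coneDist C x y := by
  have hratio : ∀ x y : Vd d, coneRatio C (h • x) (h • y) = coneRatio C x y := fun x y => by
    simp_rw [coneRatio, smul_comm _ h, ← smul_sub, smul_mem_closure_iff_of_mem_stabilizer hh]
  rw [coneDist_eq_log, coneDist_eq_log, hratio, hratio]

end Automorphism

theorem exists_lt_nonneg_and_succ_neg {f : ℕ → ℤ} (h0 : 0 ≤ f 0) {N : ℕ} (hN : f N < 0) :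
    ∃ i < N, 0 ≤ f i ∧ f (i + 1) < 0 := by
  induction N with
  | zero => omega
  | succ n ih =>
    by_cases hn : f n < 0
    · obtain ⟨i, hi, h⟩ := ih hn
      exact ⟨i, hi.trans n.lt_succ_self, h⟩
    · exact ⟨n, n.lt_succ_self, not_lt.1 hn, hN⟩

/-- The contraction clause of `IsPSContractingSet`. -/
def ContractsSegments {d : ℕ} (C : Set (Vd d)) (Cc : ℝ) (π : Vd d → Vd d) : Prop :=
  ∀ x ∈ C, ∀ y ∈ C, Cc ≤ coneDist C (π x) (π y) →
    (∃ p ∈ segCone x y, coneDist C p (π x) ≤ Cc) ∧ (∃ p ∈ segCone x y, coneDist C p (π y) ≤ Cc)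

namespace IsProperConvexCone

variable {d : ℕ} {C : Set (Vd d)} (hC : IsProperConvexCone C) {a b x y u u' : Vd d}
include hC

theorem exists_mem_segCone_mem_Icc {f : Vd d → ℤ} {J : ℝ}
    (hf : ∀ x ∈ C, ∀ y ∈ C, (∀ v ∈ segCone x y, ∀ w ∈ segCone x y, coneDist C v w ≤ 1) →
      |(f x : ℝ) - f y| ≤ J)
    (ha : a ∈ C) (hb : b ∈ C) (ha0 : 0 ≤ f a) (hb0 : f b < 0) :
    ∃ w ∈ segCone a b, 0 ≤ f w ∧ (f w : ℝ) ≤ J := by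
  obtain ⟨L, hL⟩ := hC.exists_segCone_lineMap_coneDist_le ha hb
  set N : ℕ := ⌈L⌉₊ + 1
  have hN : (0 : ℝ) < N := by positivity
  have hLN : L ≤ N := (Nat.le_ceil L).trans (by simp [N])
  set w : ℕ → Vd d := fun i => lineMap a b ((i : ℝ) / N)
  have hmem : ∀ i ≤ N, ((i : ℝ) / N) ∈ Icc (0 : ℝ) 1 := fun i hi =>
    ⟨by positivity, div_le_one_of_le₀ (by exact_mod_cast hi) hN.le⟩
  have hwC : ∀ i ≤ N, w i ∈ C := fun i hi => hC.2.1.lineMap_mem ha hb (hmem i hi)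
  obtain ⟨i, hiN, hi0, hi1⟩ := exists_lt_nonneg_and_succ_neg (f := fun i => f (w i)) (N := N)
    (by simpa [w] using ha0) (by simpa [w, hN.ne'] using hb0)
  have hstep : |(f (w i) : ℝ) - f (w (i + 1))| ≤ J := by
    refine hf _ (hwC i hiN.le) _ (hwC (i + 1) hiN) fun v hv v' hv' => ?_
    refine (hL _ (hmem i hiN.le) _ (hmem (i + 1) hiN) v hv v' hv').trans ?_
    have hgap : |(i : ℝ) / N - ((i + 1 : ℕ) : ℝ) / N| = 1 / N := by
      rw [← sub_div, abs_div, abs_of_pos hN]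
      push_cast
      norm_num
    rw [hgap, mul_one_div]
    exact div_le_one_of_le₀ hLN hN.le
  refine ⟨w i, by simpa using smul_lineMap_mem_segCone one_pos (hmem i hiN.le), hi0, ?_⟩
  have : (f (w (i + 1)) : ℝ) < 0 := by exact_mod_cast hi1
  linarith [(abs_le.1 hstep).2]

theorem coneDist_proj_le {Cc D : ℝ} {π : Vd d → Vd d} (hπC : ∀ x ∈ C, π x ∈ C)
    (hπ : ContractsSegments C Cc π) (hx : x ∈ C) (hy : y ∈ C)
    (hD : ∀ v ∈ segCone x y, ∀ w ∈ segCone x y, coneDist C v w ≤ D) :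
    coneDist C (π x) (π y) ≤ 2 * Cc + D := by
  have hD0 : 0 ≤ D :=
    (hC.coneDist_self hx).symm.le.trans (hD x left_mem_segCone x left_mem_segCone)
  by_cases hfar : Cc ≤ coneDist C (π x) (π y)
  · obtain ⟨⟨v, hv, hvx⟩, ⟨w, hw, hwy⟩⟩ := hπ x hx y hy hfar
    have hvC := hC.segCone_subset hx hy hv
    have hwC := hC.segCone_subset hx hy hw
    have h₁ := hC.coneDist_triangle (hπC x hx) hvC (hπC y hy)
    have h₂ := hC.coneDist_triangle hvC hwC (hπC y hy)
    rw [coneDist_comm C (π x) v] at h₁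
    linarith [hD v hv w hw]
  · linarith [hC.coneDist_nonneg (hπC x hx) (hπC y hy)]

theorem abs_sub_le_of_coneDist_le {P : ℤ → Vd d} {K Cq : ℝ} (hP : ∀ i, P i ∈ C) (hK : 0 < K)
    (hlow : ∀ i j : ℤ, |(i : ℝ) - j| / K - Cq ≤ coneDist C (P i) (P j))
    (hu : u ∈ C) (hu' : u' ∈ C) (i j : ℤ) :
    |(i : ℝ) - j| ≤ K * (coneDist C u (P i) + coneDist C u u' + coneDist C u' (P j) + Cq) := by
  have h₁ := hC.coneDist_triangle (hP i) hu (hP j)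
  have h₂ := hC.coneDist_triangle hu hu' (hP j)
  rw [coneDist_comm C (P i) u] at h₁
  rw [← div_le_iff₀' hK]
  linarith [hlow i j]

end IsProperConvexCone

namespace IsProperConvexCone

variable {d : ℕ} {C : Set (Vd d)} (hC : IsProperConvexCone C) {Cc R K Cq : ℝ}
  {π : Vd d → Vd d} {P : ℤ → Vd d} {ι : Vd d → ℤ} {a b x y : Vd d}
  (hπC : ∀ x ∈ C, π x ∈ C) (hP : ∀ i, P i ∈ C) (hK : 0 < K)
  (hlow : ∀ i j : ℤ, |(i : ℝ) - j| / K - Cq ≤ coneDist C (P i) (P j))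
  (hι : ∀ x ∈ C, coneDist C (π x) (P (ι x)) ≤ R)
include hC hπC hP hK hlow hι

theorem le_coneDist_proj_of_lt_abs_sub (hx : x ∈ C) (hy : y ∈ C)
    (hxy : K * (2 * R + Cc + Cq) < |(ι x : ℝ) - ι y|) : Cc ≤ coneDist C (π x) (π y) := by
  by_contra! hnear
  have h := hC.abs_sub_le_of_coneDist_le hP hK hlow (hπC x hx) (hπC y hy) (ι x) (ι y)
  have : K * (coneDist C (π x) (P (ι x)) + coneDist C (π x) (π y) +
      coneDist C (π y) (P (ι y)) + Cq) < K * (2 * R + Cc + Cq) :=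
    mul_lt_mul_of_pos_left (by linarith [hι x hx, hι y hy]) hK
  linarith

theorem exists_mem_segCone_near_quasiGeodesic (hπ : ContractsSegments C Cc π)
    (ha : a ∈ C) (hb : b ∈ C) (ha0 : 0 ≤ ι a)
    (hgap : K * (2 * R + 2 * Cc + 1 + Cq) + K * (2 * R + Cc + Cq) < ι a) (hb0 : ι b < 0) :
    ∃ v ∈ segCone a b, ∃ i : ℤ, 0 ≤ i ∧ (i : ℝ) ≤ K * (2 * R + 2 * Cc + 1 + Cq) ∧
      coneDist C v (P i) ≤ Cc + R := by
  have hstep : ∀ x ∈ C, ∀ y ∈ C, (∀ v ∈ segCone x y, ∀ w ∈ segCone x y, coneDist C v w ≤ 1) →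
      |(ι x : ℝ) - ι y| ≤ K * (2 * R + 2 * Cc + 1 + Cq) := fun x hx y hy hxy => by
    have h := hC.abs_sub_le_of_coneDist_le hP hK hlow (hπC x hx) (hπC y hy) (ι x) (ι y)
    have hproj := hC.coneDist_proj_le hπC hπ hx hy hxy
    have : K * (coneDist C (π x) (P (ι x)) + coneDist C (π x) (π y) +
        coneDist C (π y) (P (ι y)) + Cq) ≤ K * (2 * R + 2 * Cc + 1 + Cq) :=
      mul_le_mul_of_nonneg_left (by linarith [hι x hx, hι y hy]) hK.le
    linarith
  obtain ⟨w, hw, hw0, hwJ⟩ := hC.exists_mem_segCone_mem_Icc hstep ha hb ha0 hb0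
  have hwC := hC.segCone_subset ha hb hw
  have hfar : Cc ≤ coneDist C (π w) (π a) :=
    hC.le_coneDist_proj_of_lt_abs_sub hπC hP hK hlow hι hwC ha (by
      rw [abs_sub_comm]
      exact lt_of_lt_of_le (by linarith) (le_abs_self _))
  obtain ⟨⟨v, hv, hvw⟩, -⟩ := hπ w hwC a ha hfar
  have hvC := hC.segCone_subset hwC ha hv
  refine ⟨v, segCone_subset_segCone hw left_mem_segCone hv, ι w, hw0, hwJ, ?_⟩
  linarith [hC.coneDist_triangle hvC (hπC w hwC) (hP (ι w)), hι w hwC]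

end IsProperConvexCone

namespace IsProperConvexCone

variable {d : ℕ} {C : Set (Vd d)} (hC : IsProperConvexCone C)
  {g : Matrix.GeneralLinearGroup (Fin (d + 1)) ℝ}
  (hg : g ∈ MulAction.stabilizer (Matrix.GeneralLinearGroup (Fin (d + 1)) ℝ) C)
  {S : Set (Vd d)} {x₀ y₀ : Vd d} {K Cq Cc R : ℝ} {π : Vd d → Vd d}
include hC hg

theorem coneDist_zpow_smul_le (hx₀ : x₀ ∈ C) (hy₀ : y₀ ∈ C) {z : Vd d} (hz : z ∈ C)
    (hup : ∀ m n : ℤ, coneDist C (g ^ m • y₀) (g ^ n • y₀) ≤ K * |(m : ℝ) - n| + Cq) (i : ℤ) :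
    coneDist C x₀ (g ^ i • z) ≤ coneDist C x₀ y₀ + (K * |(i : ℝ)| + Cq) + coneDist C y₀ z := by
  have h₁ := hC.coneDist_triangle hx₀ hy₀ (zpow_smul_mem_of_mem_stabilizer hg hz i)
  have h₂ := hC.coneDist_triangle hy₀ (zpow_smul_mem_of_mem_stabilizer hg hy₀ i)
    (zpow_smul_mem_of_mem_stabilizer hg hz i)
  have h₃ := hup 0 i
  rw [zpow_zero, one_smul, Int.cast_zero, zero_sub, abs_neg] at h₃
  rw [coneDist_smul_of_mem_stabilizer (Subgroup.zpow_mem _ hg i)] at h₂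
  linarith

theorem exists_abs_index_zpow_sub_le {ι : Vd d → ℤ} (hx₀ : x₀ ∈ C) (hSC : S ⊆ C)
    (hy₀ : y₀ ∈ S) (hSinv : ∀ n : ℤ, ∀ v ∈ S, g ^ n • v ∈ S) (hπS : ∀ x ∈ C, π x ∈ S)
    (hπnear : ∀ x ∈ S, coneDist C x (π x) ≤ Cc) (hπ : ContractsSegments C Cc π) (hK : 0 < K)
    (hlow : ∀ m n : ℤ, |(m : ℝ) - n| / K - Cq ≤ coneDist C (g ^ m • y₀) (g ^ n • y₀))
    (hι : ∀ x ∈ C, coneDist C (π x) (g ^ ι x • y₀) ≤ R) :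
    ∃ E, ∀ n : ℤ, |(ι (g ^ n • x₀) : ℝ) - n| ≤ E := by
  obtain ⟨D, hD⟩ := hC.exists_segCone_coneDist_le hx₀ (hSC hy₀)
  refine ⟨K * (R + (3 * Cc + D) + Cq), fun n => ?_⟩
  have hπC : ∀ x ∈ C, π x ∈ C := fun x hx => hSC (hπS x hx)
  have hXC := zpow_smul_mem_of_mem_stabilizer hg hx₀ n
  have hPS := hSinv n y₀ hy₀
  have hdiam : ∀ v ∈ segCone (g ^ n • x₀) (g ^ n • y₀), ∀ w ∈ segCone (g ^ n • x₀) (g ^ n • y₀),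
      coneDist C v w ≤ D := by
    rw [segCone_smul]
    intro _ hv' _ hw'
    obtain ⟨v, hv, rfl⟩ := Set.mem_smul_set.1 hv'
    obtain ⟨w, hw, rfl⟩ := Set.mem_smul_set.1 hw'
    rw [coneDist_smul_of_mem_stabilizer (Subgroup.zpow_mem _ hg n)]
    exact hD v hv w hw
  have h₁ := hC.coneDist_proj_le hπC hπ hXC (hSC hPS) hdiam
  have h₂ := hC.coneDist_triangle (hπC _ hXC) (hπC _ (hSC hPS)) (hSC hPS)
  have h₃ := hπnear _ hPS
  have h := hC.abs_sub_le_of_coneDist_le (zpow_smul_mem_of_mem_stabilizer hg (hSC hy₀)) hK hlow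
    (hπC _ hXC) (hπC _ hXC) (ι (g ^ n • x₀)) n
  rw [hC.coneDist_self (hπC _ hXC)] at h
  rw [coneDist_comm C (g ^ n • y₀)] at h₃
  refine h.trans (mul_le_mul_of_nonneg_left ?_ hK.le)
  linarith [hι _ hXC]

theorem exists_segCone_zpow_coneDist_le_of_lt {ι : Vd d → ℤ} {E : ℝ} (hx₀ : x₀ ∈ C)
    (hy₀ : y₀ ∈ C) (hπC : ∀ x ∈ C, π x ∈ C) (hπ : ContractsSegments C Cc π) (hK : 0 < K)
    (hqg : ∀ m n : ℤ, |(m : ℝ) - n| / K - Cq ≤ coneDist C (g ^ m • y₀) (g ^ n • y₀) ∧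
      coneDist C (g ^ m • y₀) (g ^ n • y₀) ≤ K * |(m : ℝ) - n| + Cq)
    (hι : ∀ x ∈ C, coneDist C (π x) (g ^ ι x • y₀) ≤ R)
    (hE : ∀ n : ℤ, |(ι (g ^ n • x₀) : ℝ) - n| ≤ E) :
    ∃ T D : ℝ, ∀ n m : ℕ, T < n → T < m →
      ∃ v ∈ segCone (g ^ (n : ℤ) • x₀) (g ^ (-(m : ℤ)) • x₀), coneDist C x₀ v ≤ D := by
  set J := K * (2 * R + 2 * Cc + 1 + Cq)
  refine ⟨E + |J + K * (2 * R + Cc + Cq)|, coneDist C x₀ y₀ + (K * J + Cq) + (Cc + R),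
    fun n m hn hm => ?_⟩
  have hgap := le_abs_self (J + K * (2 * R + Cc + Cq))
  have hgap₀ := abs_nonneg (J + K * (2 * R + Cc + Cq))
  have ha := (abs_le.1 (hE n)).1
  have hb := (abs_le.1 (hE (-m))).2
  push_cast at ha hb
  have hXn := zpow_smul_mem_of_mem_stabilizer hg hx₀ n
  have hXm := zpow_smul_mem_of_mem_stabilizer hg hx₀ (-m)
  obtain ⟨v, hv, i, hi0, hiJ, hvi⟩ := hC.exists_mem_segCone_near_quasiGeodesic hπC
    (zpow_smul_mem_of_mem_stabilizer hg hy₀) hK (fun m n => (hqg m n).1) hι hπ hXn hXm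
    (by exact_mod_cast (by linarith : (0 : ℝ) ≤ ι (g ^ (n : ℤ) • x₀)))
    (by linarith) (by exact_mod_cast (by linarith : (ι (g ^ (-(m : ℤ)) • x₀) : ℝ) < 0))
  refine ⟨v, hv, ?_⟩
  have h₁ := hC.coneDist_zpow_smul_le hg hx₀ hy₀ hy₀ (fun m n => (hqg m n).2) i
  have h₂ := hC.coneDist_triangle hx₀ (zpow_smul_mem_of_mem_stabilizer hg hy₀ i)
    (hC.segCone_subset hXn hXm hv)
  have hKi : K * |(i : ℝ)| ≤ K * J := by
    gcongr
    rwa [abs_of_nonneg (by exact_mod_cast hi0)]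
  rw [hC.coneDist_self hy₀, coneDist_comm C (g ^ i • y₀)] at *
  linarith

theorem exists_segCone_zpow_coneDist_le (hx₀ : x₀ ∈ C) (hSC : S ⊆ C) (hy₀ : y₀ ∈ S)
    (hSinv : ∀ n : ℤ, ∀ v ∈ S, g ^ n • v ∈ S) (hπS : ∀ x ∈ C, π x ∈ S)
    (hπnear : ∀ x ∈ S, coneDist C x (π x) ≤ Cc) (hπ : ContractsSegments C Cc π) (hK : 0 < K)
    (hqg : ∀ m n : ℤ, |(m : ℝ) - n| / K - Cq ≤ coneDist C (g ^ m • y₀) (g ^ n • y₀) ∧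
      coneDist C (g ^ m • y₀) (g ^ n • y₀) ≤ K * |(m : ℝ) - n| + Cq)
    (hcob : ∀ v ∈ S, ∃ n : ℤ, coneDist C v (g ^ n • y₀) ≤ R) :
    ∃ D, ∀ n m : ℕ, ∃ v ∈ segCone (g ^ (n : ℤ) • x₀) (g ^ (-(m : ℤ)) • x₀),
      coneDist C x₀ v ≤ D := by
  have hπC : ∀ x ∈ C, π x ∈ C := fun x hx => hSC (hπS x hx)
  have hindex : ∀ x, ∃ i : ℤ, x ∈ C → coneDist C (π x) (g ^ i • y₀) ≤ R := fun x => by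
    by_cases hx : x ∈ C
    · obtain ⟨i, hi⟩ := hcob _ (hπS x hx)
      exact ⟨i, fun _ => hi⟩
    · exact ⟨0, fun h => (hx h).elim⟩
  choose ι hι using hindex
  obtain ⟨E, hE⟩ := hC.exists_abs_index_zpow_sub_le hg hx₀ hSC hy₀ hSinv hπS hπnear hπ hK
    (fun m n => (hqg m n).1) hι
  obtain ⟨T, D, hD⟩ := hC.exists_segCone_zpow_coneDist_le_of_lt hg hx₀ (hSC hy₀) hπC hπ hK hqg
    hι hE
  have horbit := hC.coneDist_zpow_smul_le hg hx₀ (hSC hy₀) hx₀ (fun m n => (hqg m n).2)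
  set D₀ := coneDist C x₀ y₀
  refine ⟨max (D₀ + (K * |T| + Cq) + D₀) D, fun n m => ?_⟩
  by_cases hn : (n : ℝ) ≤ T
  · refine ⟨_, left_mem_segCone, le_max_of_le_left ((horbit n).trans ?_)⟩
    have hnT : |((n : ℤ) : ℝ)| ≤ |T| := by
      rw [Int.cast_natCast, Nat.abs_cast]
      exact hn.trans (le_abs_self T)
    rw [coneDist_comm C y₀]
    linarith [mul_le_mul_of_nonneg_left hnT hK.le]
  by_cases hm : (m : ℝ) ≤ T
  · refine ⟨_, right_mem_segCone, le_max_of_le_left ((horbit _).trans ?_)⟩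
    have hmT : |((-(m : ℤ) : ℤ) : ℝ)| ≤ |T| := by
      rw [Int.cast_neg, Int.cast_natCast, abs_neg, Nat.abs_cast]
      exact hm.trans (le_abs_self T)
    rw [coneDist_comm C y₀]
    linarith [mul_le_mul_of_nonneg_left hmT hK.le]
  obtain ⟨v, hv, hvD⟩ := hD n m (not_le.1 hn) (not_le.1 hm)
  exact ⟨v, hv, le_max_of_le_right hvD⟩

end IsProperConvexCone

theorem contracting_orbit_limits_segment_in_domain_general {d : ℕ} (C : Set (Vd d))
    (hC : IsProperConvexCone C)
    (g : Matrix.GeneralLinearGroup (Fin (d + 1)) ℝ)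
    (hpres : PreservesCone C (g : Matrix (Fin (d + 1)) (Fin (d + 1)) ℝ))
    (hcontr : IsContractingElement C g)
    (x₀ : Vd d) (hx₀ : x₀ ∈ C)
    (nseq mseq : ℕ → ℕ)
    (p q : Vd d) (hp0 : p ≠ 0) (hq0 : q ≠ 0)
    (cp cq : ℕ → ℝ) (hcp : ∀ k, 0 < cp k) (hcq : ∀ k, 0 < cq k)
    (hplim : Tendsto (fun k => cp k • (zpowMat g (nseq k)).mulVec x₀) atTop (nhds p))
    (hqlim : Tendsto (fun k => cq k • (zpowMat g (-(mseq k : ℤ))).mulVec x₀) atTop (nhds q))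
    (hpE : p ∈ closure C ∧ p ∈ Eset (g : Matrix (Fin (d + 1)) (Fin (d + 1)) ℝ))
    (hqE : q ∈ closure C ∧ q ∈ Eset ((g⁻¹ : Matrix.GeneralLinearGroup (Fin (d + 1)) ℝ) :
      Matrix (Fin (d + 1)) (Fin (d + 1)) ℝ)) :
    openSegCone p q ⊆ C := by
  obtain ⟨y₀, -, -, ⟨K, Cq, hK, -, hqg⟩, S, hSC, hy₀S, hSinv, ⟨Cc, π, hπS, hπnear, hπ⟩, R,
    hcob⟩ := hcontr
  simp only [zpowMat_mulVec] at hqg hSinv hcob hplim hqlim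
  obtain ⟨D, hD⟩ := hC.exists_segCone_zpow_coneDist_le hpres hx₀ hSC hy₀S hSinv hπS hπnear hπ
    (one_pos.trans_le hK) hqg hcob
  have hX (n : ℤ) := zpow_smul_mem_of_mem_stabilizer hpres hx₀ n
  refine hC.openSegCone_subset_of_tendsto (D := D) hx₀ (fun k => hC.smul_mem (hX _) (hcp k))
    (fun k => hC.smul_mem (hX _) (hcq k)) hplim hqlim hpE.1 hqE.1 hp0 hq0 fun k => ?_
  obtain ⟨v, hv, hvD⟩ := hD (nseq k) (mseq k)
  exact ⟨v, segCone_subset_segCone_smul (hcp k) (hcq k) hv, hvD⟩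

/-- If `γ` is a contracting element for `(Ω, PS^Ω)`, `p` is a projective accumulation
point of a forward orbit lying in `E_γ⁺` and `q` one of a backward orbit lying in `E_γ⁻`,
then the open segment `(p,q)` is contained in `Ω`. -/
theorem contracting_orbit_limits_segment_in_domain {d : ℕ} (C : Set (Vd d))
    (hC : IsProperConvexCone C)
    (g : Matrix.GeneralLinearGroup (Fin (d + 1)) ℝ)
    (hpres : PreservesCone C (g : Matrix (Fin (d + 1)) (Fin (d + 1)) ℝ))
    (hcontr : IsContractingElement C g)
    (x₀ : Vd d) (hx₀ : x₀ ∈ C)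
    (nseq mseq : ℕ → ℕ) (hn : ∀ k, 0 < nseq k) (hm : ∀ k, 0 < mseq k)
    (p q : Vd d) (hp0 : p ≠ 0) (hq0 : q ≠ 0)
    (cp cq : ℕ → ℝ) (hcp : ∀ k, 0 < cp k) (hcq : ∀ k, 0 < cq k)
    (hplim : Tendsto (fun k => cp k • (zpowMat g (nseq k)).mulVec x₀) atTop (nhds p))
    (hqlim : Tendsto (fun k => cq k • (zpowMat g (-(mseq k : ℤ))).mulVec x₀) atTop (nhds q))
    (hpE : p ∈ closure C ∧ p ∈ Eset (g : Matrix (Fin (d + 1)) (Fin (d + 1)) ℝ))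
    (hqE : q ∈ closure C ∧ q ∈ Eset ((g⁻¹ : Matrix.GeneralLinearGroup (Fin (d + 1)) ℝ) :
      Matrix (Fin (d + 1)) (Fin (d + 1)) ℝ)) :
    openSegCone p q ⊆ C :=
  contracting_orbit_limits_segment_in_domain_general C hC g hpres hcontr x₀ hx₀ nseq mseq p q hp0
    hq0 cp cq hcp hcq hplim hqlim hpE hqE
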